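/- arXiv:1211.4651 — 3 statements merged into one kernel-verified Lean document; each statement's English description precedes it below -/
import Mathlib

section
/- For every n ≥ 1 and atomic propositions tick and A, every CTL formula that is equivalent to the CCTL1 formula EF_{#tick < n} A (i.e., satisfied by exactly the same states of every Kripke structure) has size at least n; since |EF_{#tick < n} A| = O(log n) with binary-encoded constants, CCTL1 can be exponentially more succinct than CTL. -/
open scoped Classical

noncomputable section

/-- A Kripke structure over atomic propositions indexed by `ℕ`;
proposition `0` plays the role of `tick` and proposition `1` of `A`. -/
structure Kripke (Q : Type) where
  R : Q → Q → Prop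
  total : ∀ q, ∃ q', R q q'
  label : Q → ℕ → Prop

/-- An (infinite) run of a Kripke structure. -/
def Kripke.Run {Q : Type} (S : Kripke Q) (ρ : ℕ → Q) : Prop :=
  ∀ i, S.R (ρ i) (ρ (i + 1))

/-- The strict prefix `ρ(0) ⋯ ρ(n-1)` of a run (`n` states). -/
def runPrefix {Q : Type} (ρ : ℕ → Q) (n : ℕ) : List Q :=
  (List.range n).map ρ

/-- The number of states of a finite prefix satisfying a predicate. -/
def countSat {Q : Type} (p : Q → Prop) : List Q → ℕ
  | [] => 0
  | s :: t => (if p s then 1 else 0) + countSat p t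

/-- CTL formulas. -/
inductive CTL : Type where
  | atom : ℕ → CTL
  | and : CTL → CTL → CTL
  | not : CTL → CTL
  | eu : CTL → CTL → CTL
  | au : CTL → CTL → CTL

/-- Satisfaction of a CTL formula at a state. -/
def CTL.sat {Q : Type} (S : Kripke Q) : CTL → Q → Prop
  | .atom p, q => S.label q p
  | .and φ ψ, q => CTL.sat S φ q ∧ CTL.sat S ψ q
  | .not φ, q => ¬ CTL.sat S φ q
  | .eu φ ψ, q => ∃ ρ, S.Run ρ ∧ ρ 0 = q ∧
      ∃ i, CTL.sat S ψ (ρ i) ∧ ∀ j < i, CTL.sat S φ (ρ j)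
  | .au φ ψ, q => ∀ ρ, S.Run ρ → ρ 0 = q →
      ∃ i, CTL.sat S ψ (ρ i) ∧ ∀ j < i, CTL.sat S φ (ρ j)

/-- Size (number of symbols) of a CTL formula. -/
def CTL.size : CTL → ℕ
  | .atom _ => 1
  | .and φ ψ => 1 + φ.size + ψ.size
  | .not φ => 1 + φ.size
  | .eu φ ψ => 1 + φ.size + ψ.size
  | .au φ ψ => 1 + φ.size + ψ.size

/-- Satisfaction of the CCTL1 formula `EF_{#tick < n} A` at `q`:
there are a run `ρ` from `q` and `i ≥ 0` such that `ρ(i) ⊨ A` and the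
strict prefix `ρ|ᵢ₋₁` contains strictly fewer than `n` tick-states. -/
def EFtickSat {Q : Type} (S : Kripke Q) (n : ℕ) (q : Q) : Prop :=
  ∃ ρ, S.Run ρ ∧ ρ 0 = q ∧
    ∃ i, S.label (ρ i) 1 ∧ countSat (fun s => S.label s 0) (runPrefix ρ i) < n

/-! ### Auxiliary development: a chain Kripke structure -/

/-- The chain `0 → 1 → ⋯ → m → m`, every state ticks, only `m` satisfies `A`. -/
def ch (m : ℕ) : Kripke (Fin (m+1)) where
  R a b := (b : ℕ) = min ((a : ℕ) + 1) m
  total a := ⟨⟨min ((a : ℕ) + 1) m, by omega⟩, rfl⟩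
  label a p := p = 0 ∨ (p = 1 ∧ (a : ℕ) = m)

/-- The canonical (unique) run of `ch m` starting at `i`. -/
def crun (m i : ℕ) : ℕ → Fin (m+1) := fun t => ⟨min (i + t) m, by omega⟩

lemma crun_run (m i : ℕ) : (ch m).Run (crun m i) := by
  intro t
  show ((crun m i (t+1)) : ℕ) = min ((crun m i t : ℕ) + 1) m
  simp only [crun]
  omega

lemma run_val {m : ℕ} {ρ : ℕ → Fin (m+1)} (hρ : (ch m).Run ρ) :
    ∀ t, (ρ t : ℕ) = min ((ρ 0 : ℕ) + t) m := by
  intro t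
  induction t with
  | zero => have := (ρ 0).isLt; omega
  | succ t ih =>
      have h : (ρ (t+1) : ℕ) = min ((ρ t : ℕ) + 1) m := hρ t
      omega

lemma eu_char {m : ℕ} (φ ψ : CTL) (q : Fin (m+1)) :
    CTL.sat (ch m) (.eu φ ψ) q ↔
      ∃ k : Fin (m+1), (q : ℕ) ≤ (k : ℕ) ∧ CTL.sat (ch m) ψ k ∧
        ∀ k' : Fin (m+1), (q : ℕ) ≤ (k' : ℕ) → (k' : ℕ) < (k : ℕ) →
          CTL.sat (ch m) φ k' := by
  constructor
  · rintro ⟨ρ, hρ, h0, t, hψ, hφ⟩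
    have hv := run_val hρ
    rw [h0] at hv
    have hq := q.isLt
    refine ⟨ρ t, by have := hv t; omega, hψ, ?_⟩
    intro k' h1 h2
    have hk' := k'.isLt
    have ht := hv t
    have hρt' : ρ ((k' : ℕ) - (q : ℕ)) = k' := by
      apply Fin.ext
      rw [hv]
      omega
    have : (k' : ℕ) - (q : ℕ) < t := by omega
    have := hφ _ this
    rwa [hρt'] at this
  · rintro ⟨k, hqk, hψ, hφ⟩
    have hk := k.isLt
    have hq := q.isLt
    refine ⟨crun m q, crun_run m q, by apply Fin.ext; simp [crun]; omega,
      (k : ℕ) - (q : ℕ), ?_, ?_⟩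
    · have : crun m q ((k : ℕ) - (q : ℕ)) = k := by
        apply Fin.ext; simp [crun]; omega
      rwa [this]
    · intro j hj
      have hval : (crun m q j : ℕ) = (q : ℕ) + j := by simp [crun]; omega
      exact hφ _ (by omega) (by omega)

lemma au_char {m : ℕ} (φ ψ : CTL) (q : Fin (m+1)) :
    CTL.sat (ch m) (.au φ ψ) q ↔
      ∃ k : Fin (m+1), (q : ℕ) ≤ (k : ℕ) ∧ CTL.sat (ch m) ψ k ∧
        ∀ k' : Fin (m+1), (q : ℕ) ≤ (k' : ℕ) → (k' : ℕ) < (k : ℕ) →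
          CTL.sat (ch m) φ k' := by
  constructor
  · intro hsat
    obtain ⟨t, hψ, hφ⟩ := hsat (crun m q) (crun_run m q)
      (by apply Fin.ext; simp [crun]; omega)
    have hq := q.isLt
    refine ⟨crun m q t, by simp [crun]; omega, hψ, ?_⟩
    intro k' h1 h2
    have hk' := k'.isLt
    have hct : (crun m q t : ℕ) = min ((q : ℕ) + t) m := rfl
    have hρt' : crun m q ((k' : ℕ) - (q : ℕ)) = k' := by
      apply Fin.ext; simp [crun]; omega
    have : (k' : ℕ) - (q : ℕ) < t := by omega
    have := hφ _ this
    rwa [hρt'] at this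
  · rintro ⟨k, hqk, hψ, hφ⟩ ρ hρ h0
    have hv := run_val hρ
    rw [h0] at hv
    have hk := k.isLt
    have hq := q.isLt
    refine ⟨(k : ℕ) - (q : ℕ), ?_, ?_⟩
    · have : ρ ((k : ℕ) - (q : ℕ)) = k := by apply Fin.ext; rw [hv]; omega
      rwa [this]
    · intro j hj
      have hval : (ρ j : ℕ) = (q : ℕ) + j := by rw [hv]; omega
      exact hφ _ (by omega) (by omega)

/-- A CTL formula of size `s` has a constant truth value on states of the
chain whose distance to the end is at least `s`. -/
lemma sat_const (m : ℕ) (φ : CTL) (i j : Fin (m+1))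
    (hi : (i : ℕ) + φ.size ≤ m) (hj : (j : ℕ) + φ.size ≤ m)
    (hs : CTL.sat (ch m) φ i) : CTL.sat (ch m) φ j := by
  induction φ generalizing i j with
  | atom p =>
      simp only [CTL.size] at hi hj
      rcases hs with h | ⟨h1, h2⟩
      · exact Or.inl h
      · omega
  | and φ ψ ih1 ih2 =>
      simp only [CTL.size] at hi hj
      exact ⟨ih1 i j (by omega) (by omega) hs.1, ih2 i j (by omega) (by omega) hs.2⟩
  | not φ ih =>
      simp only [CTL.size] at hi hj
      intro hj'
      exact hs (ih j i (by omega) (by omega) hj')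
  | eu φ ψ ih1 ih2 =>
      simp only [CTL.size] at hi hj
      rw [eu_char] at hs ⊢
      obtain ⟨k, hik, hψk, hφ⟩ := hs
      by_cases hj' : CTL.sat (ch m) ψ j
      · exact ⟨j, le_refl _, hj', fun k' h1 h2 => absurd (lt_of_le_of_lt h1 h2)
          (lt_irrefl _)⟩
      · have hk : m < (k : ℕ) + ψ.size := by
          by_contra hc
          exact hj' (ih2 k j (by omega) (by omega) hψk)
        refine ⟨k, by omega, hψk, ?_⟩
        intro k' h1 h2
        by_cases h3 : (i : ℕ) ≤ (k' : ℕ)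
        · exact hφ k' h3 h2
        · have hφi : CTL.sat (ch m) φ i := hφ i (le_refl _) (by omega)
          exact ih1 i k' (by omega) (by omega) hφi
  | au φ ψ ih1 ih2 =>
      simp only [CTL.size] at hi hj
      rw [au_char] at hs ⊢
      obtain ⟨k, hik, hψk, hφ⟩ := hs
      by_cases hj' : CTL.sat (ch m) ψ j
      · exact ⟨j, le_refl _, hj', fun k' h1 h2 => absurd (lt_of_le_of_lt h1 h2)
          (lt_irrefl _)⟩
      · have hk : m < (k : ℕ) + ψ.size := by
          by_contra hc
          exact hj' (ih2 k j (by omega) (by omega) hψk)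
        refine ⟨k, by omega, hψk, ?_⟩
        intro k' h1 h2
        by_cases h3 : (i : ℕ) ≤ (k' : ℕ)
        · exact hφ k' h3 h2
        · have hφi : CTL.sat (ch m) φ i := hφ i (le_refl _) (by omega)
          exact ih1 i k' (by omega) (by omega) hφi

lemma countSat_all {Q : Type} (p : Q → Prop) (hp : ∀ s, p s) :
    ∀ l : List Q, countSat p l = l.length := by
  intro l
  induction l with
  | nil => rfl
  | cons a t ih => simp [countSat, hp a, ih]; omega

/-- every CTL formula equivalent to `EF_{#tick < n} A`
(for `n ≥ 1`) has size at least `n`. -/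
theorem ctl_size_lower_bound_EFtick (n : ℕ) (hn : 1 ≤ n) (φ' : CTL)
    (h : ∀ (Q : Type) [Fintype Q] (S : Kripke Q) (q : Q),
        CTL.sat S φ' q ↔ EFtickSat S n q) :
    n ≤ φ'.size := by
  by_contra hlt
  push_neg at hlt
  set s := φ'.size with hsdef
  set m := n + s with hmdef
  -- two states at distances n and n-1 from the end
  have ha : s < m + 1 := by omega
  have hb : s + 1 < m + 1 := by omega
  set a : Fin (m+1) := ⟨s, ha⟩ with hadef
  set b : Fin (m+1) := ⟨s + 1, hb⟩ with hbdef
  have hequiv := fun q => h (Fin (m+1)) (ch m) q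
  -- EFtickSat holds at b
  have hEFb : EFtickSat (ch m) n b := by
    refine ⟨crun m (s+1), crun_run m (s+1), by apply Fin.ext; show min (s + 1 + 0) m = s + 1; omega,
      n - 1, ?_, ?_⟩
    · right
      refine ⟨rfl, ?_⟩
      show (min (s + 1 + (n-1)) m) = m
      omega
    · have : countSat (fun q => (ch m).label q 0) (runPrefix (crun m (s+1)) (n-1))
          = (runPrefix (crun m (s+1)) (n-1)).length :=
        countSat_all _ (fun q => Or.inl rfl) _
      rw [this]
      simp [runPrefix]
      omega
  -- EFtickSat fails at a
  have hEFa : ¬ EFtickSat (ch m) n a := by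
    rintro ⟨ρ, hρ, h0, i, h1, hcount⟩
    have hv := run_val hρ
    rw [h0] at hv
    have hρi : (ρ i : ℕ) = min (s + i) m := hv i
    have hm : (ρ i : ℕ) = m := by
      rcases h1 with h | ⟨_, h⟩
      · omega
      · exact h
    have hin : n ≤ i := by omega
    have : countSat (fun q => (ch m).label q 0) (runPrefix ρ i)
        = (runPrefix ρ i).length :=
      countSat_all _ (fun q => Or.inl rfl) _
    rw [this] at hcount
    simp [runPrefix] at hcount
    omega
  -- but φ' cannot distinguish a from b
  have hab : CTL.sat (ch m) φ' a ↔ CTL.sat (ch m) φ' b :=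
    ⟨sat_const m φ' a b (by change s + φ'.size ≤ m; omega) (by change s + 1 + φ'.size ≤ m; omega),
     sat_const m φ' b a (by change s + 1 + φ'.size ≤ m; omega) (by change s + φ'.size ≤ m; omega)⟩
  have := (hequiv a).symm.trans (hab.trans (hequiv b))
  exact hEFa (this.mpr hEFb)
end
end

section
/- Let G be a finite directed graph with edge weights in {−1,0,1}, let q, q' be vertices and let k ≥ 0 and m be integers with 0 ≤ m ≤ k. Then there is a walk from q to q' of total weight k if and only if there exists a vertex q'' with a walk of total weight m from q to q'' and a walk of total weight k − m from q'' to q'. (In particular, the weight-k reachability relation R_k satisfies R_k = R_{⌊k/2⌋} ∘ R_{⌈k/2⌉}.) -/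
noncomputable section

/-- Walks in a finite directed graph with integer edge weights, given by a
finite edge set `E ⊆ V × ℤ × V`. `Walk E u v w n` means: there is a walk
from `u` to `v` of total weight `w` using exactly `n` edges. -/
inductive Walk {V : Type} (E : Finset (V × ℤ × V)) : V → V → ℤ → ℕ → Prop
  | nil (v : V) : Walk E v v 0 0
  | cons {u w x : V} {d k : ℤ} {n : ℕ} :
      (u, d, w) ∈ E → Walk E w x k n → Walk E u x (d + k) (n + 1)

lemma Walk.append {V : Type} {E : Finset (V × ℤ × V)} {u v x : V} {w w' : ℤ} {n n' : ℕ}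
    (h1 : Walk E u v w n) (h2 : Walk E v x w' n') : Walk E u x (w + w') (n + n') := by
  induction h1 with
  | nil v => simpa using h2
  | @cons a b c d k m he _ ih =>
    have := Walk.cons he (ih h2)
    rwa [show d + (k + w') = d + k + w' by ring, show m + n' + 1 = m + 1 + n' by omega] at this

lemma Walk.split {V : Type} {E : Finset (V × ℤ × V)}
    (hE : ∀ e ∈ E, e.2.1 = -1 ∨ e.2.1 = 0 ∨ e.2.1 = 1)
    {u v : V} {k : ℤ} {n : ℕ} (hw : Walk E u v k n) :
    ∀ m : ℤ, 0 ≤ m → m ≤ k →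
      ∃ q'' : V, (∃ n1 : ℕ, Walk E u q'' m n1) ∧ ∃ n2 : ℕ, Walk E q'' v (k - m) n2 := by
  induction hw with
  | nil v =>
    intro m hm0 hmk
    have hm : m = 0 := le_antisymm hmk hm0
    subst hm
    exact ⟨v, ⟨0, Walk.nil v⟩, ⟨0, Walk.nil v⟩⟩
  | @cons u w x d k' n' he hrest ih =>
    intro m hm0 hmk
    rcases eq_or_lt_of_le hm0 with h0 | hpos
    · refine ⟨u, ⟨0, by rw [← h0]; exact Walk.nil u⟩, ⟨n' + 1, ?_⟩⟩
      have : d + k' - m = d + k' := by omega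
      rw [this]
      exact Walk.cons he hrest
    · have hd : d ≤ 1 := by rcases hE _ he with h | h | h <;> simp at h <;> omega
      obtain ⟨q'', ⟨n1, w1⟩, ⟨n2, w2⟩⟩ := ih (m - d) (by omega) (by omega)
      refine ⟨q'', ⟨n1 + 1, ?_⟩, ⟨n2, ?_⟩⟩
      · have := Walk.cons he w1
        rwa [show d + (m - d) = m by ring] at this
      · rwa [show k' - (m - d) = d + k' - m by ring] at w2

/-- in a graph with weights in `{−1,0,1}`, for `0 ≤ m ≤ k`,
there is a walk from `q` to `q'` of total weight `k` iff it can be split at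
an intermediate vertex `q''` into a walk of weight `m` followed by a walk
of weight `k − m`. -/
theorem walk_weight_split
    {V : Type} [Fintype V] (E : Finset (V × ℤ × V))
    (hE : ∀ e ∈ E, e.2.1 = -1 ∨ e.2.1 = 0 ∨ e.2.1 = 1)
    (q q' : V) (k m : ℤ) (hk : 0 ≤ k) (hm0 : 0 ≤ m) (hmk : m ≤ k) :
    (∃ n : ℕ, Walk E q q' k n) ↔
      ∃ q'' : V, (∃ n : ℕ, Walk E q q'' m n) ∧
        ∃ n : ℕ, Walk E q'' q' (k - m) n := by
  constructor
  · rintro ⟨n, hw⟩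
    exact hw.split hE m hm0 hmk
  · rintro ⟨q'', ⟨n1, w1⟩, ⟨n2, w2⟩⟩
    refine ⟨n1 + n2, ?_⟩
    have := w1.append w2
    rwa [show m + (k - m) = k by ring] at this
end
end

section
/- Let S = (Q,R,ℓ) be a Kripke structure, let P, P', P₁, …, P_ℓ be atomic propositions, let α₁,…,α_ℓ ∈ {−1,1}, k ∈ ℤ, ∼ ∈ {<,≤,=,≥,>}, and let C be the counting constraint Σ_{i=1}^{ℓ} αᵢ·#Pᵢ ∼ k. Then there exists a durational Kripke structure S' = (Q',R',ℓ') with all transition weights in {−1,0,1}, with Q ⊆ Q' and |Q'| ≤ (ℓ+2)·|Q|, and with a fresh atomic proposition ok labelling exactly the states of Q, such that for every q ∈ Q: q ⊨_S E P U_C P' iff q ⊨_{S'} E (ok → P) U_{∼k} (ok ∧ P'), and q ⊨_S A P U_C P' iff q ⊨_{S'} A (ok → P) U_{∼k} (ok ∧ P'). -/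
open scoped Classical

noncomputable section

/-- Comparison operators `<, ≤, =, ≥, >`. -/
inductive Cmp where
  | lt | le | eq | ge | gt

def Cmp.eval : Cmp → ℤ → ℤ → Prop
  | .lt, a, b => a < b
  | .le, a, b => a ≤ b
  | .eq, a, b => a = b
  | .ge, a, b => a ≥ b
  | .gt, a, b => a > b

/-- A durational Kripke structure: transitions carry integer weights. -/
structure DKS (Q : Type) where
  R : Q → ℤ → Q → Prop
  total : ∀ q, ∃ d q', R q d q'
  label : Q → ℕ → Prop

/-- A run of a DKS: states `ρ` together with transition weights `δ`. -/
def DKS.Run {Q : Type} (S : DKS Q) (ρ : ℕ → Q) (δ : ℕ → ℤ) : Prop :=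
  ∀ i, S.R (ρ i) (δ i) (ρ (i + 1))

/-- Value `Σᵢ αᵢ·#Pᵢ` of the counting expression on the strict prefix
`ρ|ᵢ₋₁` (`i` states) of a run of the Kripke structure `S`. -/
def cval {Q : Type} (S : Kripke Q) {L : ℕ} (α : Fin L → ℤ) (ps : Fin L → ℕ)
    (σ : List Q) : ℤ :=
  ∑ t : Fin L, α t * (countSat (fun s => S.label s (ps t)) σ : ℤ)

/-- `q ⊨_S E P U_C P'` (existential counting until over the KS `S`),
where `C = Σᵢ αᵢ·#Pᵢ ∼ k`.  The universal version is obtained by replacing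
the run quantifier. -/
def KSatEU {Q : Type} (S : Kripke Q) {L : ℕ} (p p' : ℕ) (α : Fin L → ℤ)
    (ps : Fin L → ℕ) (c : Cmp) (k : ℤ) (q : Q) : Prop :=
  ∃ ρ, S.Run ρ ∧ ρ 0 = q ∧
    ∃ i, S.label (ρ i) p' ∧ c.eval (cval S α ps (runPrefix ρ i)) k ∧
      ∀ j < i, S.label (ρ j) p

def KSatAU {Q : Type} (S : Kripke Q) {L : ℕ} (p p' : ℕ) (α : Fin L → ℤ)
    (ps : Fin L → ℕ) (c : Cmp) (k : ℤ) (q : Q) : Prop :=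
  ∀ ρ, S.Run ρ → ρ 0 = q →
    ∃ i, S.label (ρ i) p' ∧ c.eval (cval S α ps (runPrefix ρ i)) k ∧
      ∀ j < i, S.label (ρ j) p

/-- `q ⊨_{S'} E (ok → P) U_{∼k} (ok ∧ P')` over a DKS `S'`. -/
def DSatEU {Q' : Type} (S' : DKS Q') (ok p p' : ℕ) (c : Cmp) (k : ℤ)
    (q : Q') : Prop :=
  ∃ ρ δ, S'.Run ρ δ ∧ ρ 0 = q ∧
    ∃ i, (S'.label (ρ i) ok ∧ S'.label (ρ i) p') ∧
      c.eval (∑ j ∈ Finset.range i, δ j) k ∧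
      ∀ j < i, (S'.label (ρ j) ok → S'.label (ρ j) p)

def DSatAU {Q' : Type} (S' : DKS Q') (ok p p' : ℕ) (c : Cmp) (k : ℤ)
    (q : Q') : Prop :=
  ∀ ρ δ, S'.Run ρ δ → ρ 0 = q →
    ∃ i, (S'.label (ρ i) ok ∧ S'.label (ρ i) p') ∧
      c.eval (∑ j ∈ Finset.range i, δ j) k ∧
      ∀ j < i, (S'.label (ρ j) ok → S'.label (ρ j) p)

/-! ### Auxiliary development for the reduction -/

lemma countSat_append {Q : Type} (pr : Q → Prop) (l1 l2 : List Q) :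
    countSat pr (l1 ++ l2) = countSat pr l1 + countSat pr l2 := by
  induction l1 with
  | nil => simp [countSat]
  | cons a t ih => simp [countSat, ih]; ring

lemma runPrefix_succ {Q : Type} (ρ : ℕ → Q) (n : ℕ) :
    runPrefix ρ (n + 1) = runPrefix ρ n ++ [ρ n] := by
  simp [runPrefix, List.range_succ]

lemma cval_append_single {Q : Type} (S : Kripke Q) {L : ℕ} (α : Fin L → ℤ)
    (ps : Fin L → ℕ) (σ : List Q) (s : Q) :
    cval S α ps (σ ++ [s]) = cval S α ps σ
      + ∑ t : Fin L, (if S.label s (ps t) then α t else 0) := by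
  unfold cval
  rw [← Finset.sum_add_distrib]
  refine Finset.sum_congr rfl fun t _ => ?_
  rw [countSat_append]
  simp only [countSat]
  push_cast
  split <;> ring

lemma divmod_succ_lt {L n : ℕ} (h : n % (L + 1) < L) :
    (n + 1) % (L + 1) = n % (L + 1) + 1 ∧ (n + 1) / (L + 1) = n / (L + 1) := by
  have hn : n + 1 = (n % (L + 1) + 1) + (L + 1) * (n / (L + 1)) := by
    have := Nat.div_add_mod n (L + 1); omega
  constructor
  · rw [hn, Nat.add_mul_mod_self_left, Nat.mod_eq_of_lt (by omega)]
  · rw [hn, Nat.add_mul_div_left _ _ (Nat.succ_pos L),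
      Nat.div_eq_of_lt (by omega), Nat.zero_add]

lemma divmod_succ_eq {L n : ℕ} (h : n % (L + 1) = L) :
    (n + 1) % (L + 1) = 0 ∧ (n + 1) / (L + 1) = n / (L + 1) + 1 := by
  have hn : n + 1 = (L + 1) * (n / (L + 1) + 1) := by
    have h2 : (L + 1) * (n / (L + 1) + 1) = (L + 1) * (n / (L + 1)) + (L + 1) := by ring
    have := Nat.div_add_mod n (L + 1); omega
  constructor
  · rw [hn, Nat.mul_mod_right]
  · rw [hn, Nat.mul_div_cancel_left _ (Nat.succ_pos L)]

/-- Extension of `ps` to `ℕ`. -/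
def psN {L : ℕ} (ps : Fin L → ℕ) : ℕ → ℕ :=
  fun j => if h : j < L then ps ⟨j, h⟩ else 0

/-- Extension of `α` to `ℕ` (zero outside `Fin L`). -/
def alN {L : ℕ} (α : Fin L → ℤ) : ℕ → ℤ :=
  fun j => if h : j < L then α ⟨j, h⟩ else 0

/-- Weight of the `j`-th micro-transition leaving a copy of state `q`. -/
def wt {Q : Type} (S : Kripke Q) {L : ℕ} (ps : Fin L → ℕ) (α : Fin L → ℤ)
    (q : Q) (j : ℕ) : ℤ :=
  if S.label q (psN ps j) then alN α j else 0

/-- The durational Kripke structure of the reduction. -/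
def mkD {Q : Type} (S : Kripke Q) {L : ℕ} (ps : Fin L → ℕ) (α : Fin L → ℤ)
    (ok : ℕ) : DKS (Q × Fin (L + 1)) where
  R := fun x d y =>
    ((x.2 : ℕ) < L ∧ y.1 = x.1 ∧ (y.2 : ℕ) = (x.2 : ℕ) + 1 ∧
        d = wt S ps α x.1 (x.2 : ℕ)) ∨
    ((x.2 : ℕ) = L ∧ S.R x.1 y.1 ∧ y.2 = 0 ∧ d = 0)
  total := by
    rintro ⟨q, j⟩
    by_cases h : (j : ℕ) < L
    · exact ⟨wt S ps α q (j : ℕ), (q, ⟨(j : ℕ) + 1, by omega⟩),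
        Or.inl ⟨h, rfl, rfl, rfl⟩⟩
    · obtain ⟨q', hq'⟩ := S.total q
      refine ⟨0, (q', 0), Or.inr ⟨?_, hq', rfl, rfl⟩⟩
      show (j : ℕ) = L
      have := j.isLt; omega
  label := fun x a => if a = ok then x.2 = 0 else S.label x.1 a

/-- Forced weights of the lifted run. -/
def dstep {Q : Type} (S : Kripke Q) {L : ℕ} (ps : Fin L → ℕ) (α : Fin L → ℤ)
    (σ : ℕ → Q) (n : ℕ) : ℤ :=
  if n % (L + 1) < L then wt S ps α (σ (n / (L + 1))) (n % (L + 1)) else 0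

/-- Lift of a run of `S` to a run of `mkD`. -/
def liftR {Q : Type} {L : ℕ} (σ : ℕ → Q) (n : ℕ) : Q × Fin (L + 1) :=
  (σ (n / (L + 1)), ⟨n % (L + 1), Nat.mod_lt _ (Nat.succ_pos L)⟩)

lemma liftR_run {Q : Type} (S : Kripke Q) {L : ℕ} (ps : Fin L → ℕ)
    (α : Fin L → ℤ) (ok : ℕ) {σ : ℕ → Q} (hσ : S.Run σ) :
    (mkD S ps α ok).Run (liftR σ) (dstep S ps α σ) := by
  intro n
  by_cases h : n % (L + 1) < L
  · obtain ⟨hm, hd⟩ := divmod_succ_lt h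
    left
    refine ⟨h, ?_, ?_, ?_⟩
    · show σ ((n + 1) / (L + 1)) = σ (n / (L + 1)); rw [hd]
    · show (n + 1) % (L + 1) = n % (L + 1) + 1; exact hm
    · simp [dstep, liftR, h]
  · have hL : n % (L + 1) = L := by
      have := Nat.mod_lt n (show 0 < L + 1 by omega); omega
    obtain ⟨hm, hd⟩ := divmod_succ_eq hL
    right
    refine ⟨hL, ?_, ?_, ?_⟩
    · show S.R (σ (n / (L + 1))) (σ ((n + 1) / (L + 1)))
      rw [hd]; exact hσ _
    · apply Fin.ext; show (n + 1) % (L + 1) = 0; exact hm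
    · simp [dstep, liftR, hL]

lemma wt_sum {Q : Type} (S : Kripke Q) {L : ℕ} (ps : Fin L → ℕ)
    (α : Fin L → ℤ) (q : Q) :
    ∑ j ∈ Finset.range L, wt S ps α q j
      = ∑ t : Fin L, (if S.label q (ps t) then α t else 0) := by
  rw [← Fin.sum_univ_eq_sum_range (fun j => wt S ps α q j) L]
  refine Finset.sum_congr rfl fun t _ => ?_
  simp [wt, psN, alN, t.isLt]

lemma dstep_sum {Q : Type} (S : Kripke Q) {L : ℕ} (ps : Fin L → ℕ)
    (α : Fin L → ℤ) (σ : ℕ → Q) (i : ℕ) :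
    ∑ j ∈ Finset.range (i * (L + 1)), dstep S ps α σ j
      = cval S α ps (runPrefix σ i) := by
  induction i with
  | zero => simp [cval, runPrefix, countSat]
  | succ i ih =>
    have h1 : (i + 1) * (L + 1) = i * (L + 1) + (L + 1) := by ring
    rw [h1, Finset.sum_range_add, ih, runPrefix_succ, cval_append_single]
    congr 1
    have hblock : ∀ j < L + 1,
        dstep S ps α σ (i * (L + 1) + j)
          = if j < L then wt S ps α (σ i) j else 0 := by
      intro j hj
      have he : i * (L + 1) + j = j + (L + 1) * i := by ring
      have hmod : (i * (L + 1) + j) % (L + 1) = j := by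
        rw [he, Nat.add_mul_mod_self_left, Nat.mod_eq_of_lt hj]
      have hdiv : (i * (L + 1) + j) / (L + 1) = i := by
        rw [he, Nat.add_mul_div_left _ _ (Nat.succ_pos L),
          Nat.div_eq_of_lt hj, Nat.zero_add]
      unfold dstep
      rw [hmod, hdiv]
    calc ∑ j ∈ Finset.range (L + 1), dstep S ps α σ (i * (L + 1) + j)
        = ∑ j ∈ Finset.range (L + 1), (if j < L then wt S ps α (σ i) j else 0) :=
          Finset.sum_congr rfl fun j hj => hblock j (Finset.mem_range.mp hj)
      _ = ∑ j ∈ Finset.range L, wt S ps α (σ i) j := by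
          rw [Finset.sum_range_succ, if_neg (lt_irrefl L), add_zero]
          exact Finset.sum_congr rfl fun j hj =>
            if_pos (Finset.mem_range.mp hj)
      _ = _ := wt_sum S ps α (σ i)

/-- Structure of any run of `mkD` starting on an `ok`-state. -/
lemma mkD_run_shape {Q : Type} (S : Kripke Q) {L : ℕ} (ps : Fin L → ℕ)
    (α : Fin L → ℤ) (ok : ℕ) {ρ' : ℕ → Q × Fin (L + 1)} {δ : ℕ → ℤ}
    (hrun : (mkD S ps α ok).Run ρ' δ) (h0 : ((ρ' 0).2 : ℕ) = 0) :
    ∀ n, ((ρ' n).2 : ℕ) = n % (L + 1) ∧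
      (ρ' n).1 = (ρ' (n / (L + 1) * (L + 1))).1 := by
  intro n
  induction n with
  | zero => simpa using h0
  | succ n ih =>
    obtain ⟨hb, hq⟩ := ih
    rcases hrun n with ⟨h1, h2, h3, _⟩ | ⟨h1, _, h3, _⟩
    · have hlt : n % (L + 1) < L := hb ▸ h1
      obtain ⟨hm, hd⟩ := divmod_succ_lt hlt
      refine ⟨by rw [h3, hb, hm], ?_⟩
      rw [h2, hq, hd]
    · have heq : n % (L + 1) = L := hb ▸ h1
      obtain ⟨hm, hd⟩ := divmod_succ_eq heq
      have hval : ((ρ' (n + 1)).2 : ℕ) = 0 := by rw [h3]; rfl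
      refine ⟨by rw [hval, hm], ?_⟩
      have hn1 : (n + 1) / (L + 1) * (L + 1) = n + 1 := by
        rw [hd]
        have h2 : (n / (L + 1) + 1) * (L + 1) = (L + 1) * (n / (L + 1)) + (L + 1) := by
          ring
        have h3 := Nat.div_add_mod n (L + 1)
        omega
      rw [hn1]

lemma mkD_run_proj {Q : Type} (S : Kripke Q) {L : ℕ} (ps : Fin L → ℕ)
    (α : Fin L → ℤ) (ok : ℕ) {ρ' : ℕ → Q × Fin (L + 1)} {δ : ℕ → ℤ}
    (hrun : (mkD S ps α ok).Run ρ' δ) (h0 : ((ρ' 0).2 : ℕ) = 0) :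
    S.Run (fun m => (ρ' (m * (L + 1))).1) := by
  intro m
  have hsh := mkD_run_shape S ps α ok hrun h0
  set n := m * (L + 1) + L with hn
  have he : n = L + (L + 1) * m := by rw [hn]; ring
  have hmod : n % (L + 1) = L := by
    rw [he, Nat.add_mul_mod_self_left, Nat.mod_eq_of_lt (by omega)]
  have hdiv : n / (L + 1) = m := by
    rw [he, Nat.add_mul_div_left _ _ (Nat.succ_pos L),
      Nat.div_eq_of_lt (by omega), Nat.zero_add]
  have hb : ((ρ' n).2 : ℕ) = L := by rw [(hsh n).1, hmod]
  rcases hrun n with ⟨h1, _, _, _⟩ | ⟨_, h2, _, _⟩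
  · omega
  · have e1 : (ρ' n).1 = (ρ' (m * (L + 1))).1 := by
      have := (hsh n).2; rwa [hdiv] at this
    have e2 : (ρ' (n + 1)).1 = (ρ' ((m + 1) * (L + 1))).1 := by
      have : n + 1 = (m + 1) * (L + 1) := by rw [hn]; ring
      rw [this]
    show S.R (ρ' (m * (L + 1))).1 (ρ' ((m + 1) * (L + 1))).1
    rw [← e1, ← e2]; exact h2

lemma mkD_run_delta {Q : Type} (S : Kripke Q) {L : ℕ} (ps : Fin L → ℕ)
    (α : Fin L → ℤ) (ok : ℕ) {ρ' : ℕ → Q × Fin (L + 1)} {δ : ℕ → ℤ}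
    (hrun : (mkD S ps α ok).Run ρ' δ) (h0 : ((ρ' 0).2 : ℕ) = 0) :
    ∀ n, δ n = dstep S ps α (fun m => (ρ' (m * (L + 1))).1) n := by
  intro n
  have hsh := mkD_run_shape S ps α ok hrun h0
  obtain ⟨hb, hq⟩ := hsh n
  rcases hrun n with ⟨h1, _, _, h4⟩ | ⟨h1, _, _, h4⟩
  · have hlt : n % (L + 1) < L := hb ▸ h1
    rw [h4, hb, hq]
    simp [dstep, hlt]
  · have heq : n % (L + 1) = L := hb ▸ h1
    rw [h4]
    simp [dstep, heq]

/-- reduction of counting-until model checking over a KS to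
TCTL model checking over a DKS with weights in `{−1,0,1}`. -/
theorem counting_to_durational
    {Q : Type} [Fintype Q] (S : Kripke Q) (p p' : ℕ) (L : ℕ)
    (ps : Fin L → ℕ) (α : Fin L → ℤ) (hα : ∀ t, α t = 1 ∨ α t = -1)
    (c : Cmp) (k : ℤ) :
    ∃ (Q' : Type) (inst : Fintype Q') (ι : Q ↪ Q') (S' : DKS Q') (ok : ℕ),
      (∀ q d q', S'.R q d q' → d = -1 ∨ d = 0 ∨ d = 1) ∧
      @Fintype.card Q' inst ≤ (L + 2) * Fintype.card Q ∧
      (ok ≠ p ∧ ok ≠ p' ∧ ∀ t, ok ≠ ps t) ∧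
      (∀ q' : Q', S'.label q' ok ↔ ∃ q : Q, ι q = q') ∧
      (∀ q : Q,
        (KSatEU S p p' α ps c k q ↔ DSatEU S' ok p p' c k (ι q)) ∧
        (KSatAU S p p' α ps c k q ↔ DSatAU S' ok p p' c k (ι q))) := by
  classical
  set okv : ℕ := p + p' + (∑ t : Fin L, ps t) + 1 with hokv
  have hok_p : okv ≠ p := by omega
  have hok_p' : okv ≠ p' := by omega
  have hok_ps : ∀ t, okv ≠ ps t := by
    intro t
    have : ps t ≤ ∑ t : Fin L, ps t :=
      Finset.single_le_sum (fun _ _ => Nat.zero_le _) (Finset.mem_univ t)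
    omega
  set S' := mkD S ps α okv with hS'
  -- basic facts about labels of `S'`
  have hlab_ok : ∀ x : Q × Fin (L + 1), S'.label x okv ↔ x.2 = 0 := by
    intro x; simp [hS', mkD]
  have hlab : ∀ (x : Q × Fin (L + 1)) (a : ℕ), a ≠ okv →
      (S'.label x a ↔ S.label x.1 a) := by
    intro x a ha; simp [hS', mkD, ha]
  refine ⟨Q × Fin (L + 1), inferInstance,
    ⟨fun q => (q, 0), fun a b h => congrArg Prod.fst h⟩, S', okv, ?_, ?_,
    ⟨hok_p, hok_p', hok_ps⟩, ?_, ?_⟩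
  · -- weights in {-1,0,1}
    rintro x d y (⟨hx, _, _, rfl⟩ | ⟨_, _, _, rfl⟩)
    · by_cases hl : S.label x.1 (psN ps (x.2 : ℕ))
      · rw [wt, if_pos hl, alN, dif_pos hx]
        rcases hα ⟨(x.2 : ℕ), hx⟩ with h | h
        · right; right; exact h
        · left; exact h
      · rw [wt, if_neg hl]; right; left; rfl
    · right; left; rfl
  · -- cardinality
    rw [Fintype.card_prod, Fintype.card_fin, mul_comm]
    exact Nat.mul_le_mul_right _ (by omega)
  · -- ok labels exactly the embedded states
    intro x
    rw [hlab_ok]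
    constructor
    · intro h; exact ⟨x.1, Prod.ext rfl h.symm⟩
    · rintro ⟨q, rfl⟩; rfl
  · -- the two equivalences
    intro q
    have hcast0 : ∀ m : ℕ, (↑(0 : Fin (L + 1)) : ℕ) = 0 := fun _ => rfl
    constructor
    · -- EU
      constructor
      · rintro ⟨ρ, hrun, hρ0, i, hp', hc, hall⟩
        refine ⟨liftR ρ, dstep S ps α ρ, liftR_run S ps α okv hrun, ?_, i * (L + 1), ?_, ?_, ?_⟩
        · show ((ρ (0 / (L + 1)), ⟨0 % (L + 1), _⟩) : Q × Fin (L + 1)) = (q, 0)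
          rw [Nat.zero_div, hρ0]
          exact Prod.ext rfl (Fin.ext (Nat.zero_mod _))
        · have hd : i * (L + 1) / (L + 1) = i := Nat.mul_div_cancel i (Nat.succ_pos L)
          have hm : i * (L + 1) % (L + 1) = 0 := Nat.mul_mod_left i (L + 1)
          constructor
          · rw [hlab_ok]; exact Fin.ext (by simpa [liftR] using hm)
          · rw [hlab (liftR ρ (i * (L + 1))) p' (fun h => hok_p' h.symm)]
            show S.label (ρ (i * (L + 1) / (L + 1))) p'
            rw [hd]; exact hp'
        · rw [dstep_sum]; exact hc
        · intro j hj hokj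
          rw [hlab_ok] at hokj
          have hjd : j / (L + 1) < i :=
            (Nat.div_lt_iff_lt_mul (Nat.succ_pos L)).mpr hj
          rw [hlab (liftR ρ j) p (fun h => hok_p h.symm)]
          exact hall _ hjd
      · rintro ⟨ρ', δ, hrun, h0, i', ⟨hok, hp'⟩, hc, hall⟩
        have h02 : ((ρ' 0).2 : ℕ) = 0 := by rw [h0]; rfl
        set σ : ℕ → Q := fun m => (ρ' (m * (L + 1))).1 with hσ
        have hσrun : S.Run σ := mkD_run_proj S ps α okv hrun h02
        have hσ0 : σ 0 = q := by
          show (ρ' (0 * (L + 1))).1 = q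
          rw [Nat.zero_mul, h0]
          rfl
        have hsh := mkD_run_shape S ps α okv hrun h02
        have hi'm : i' % (L + 1) = 0 := by
          rw [hlab_ok] at hok
          have := (hsh i').1
          rw [hok] at this
          exact this.symm
        set m := i' / (L + 1) with hm
        have hi' : i' = m * (L + 1) := by
          rw [mul_comm, hm]
          have := Nat.div_add_mod i' (L + 1); omega
        refine ⟨σ, hσrun, hσ0, m, ?_, ?_, ?_⟩
        · rw [hlab _ p' (fun h => hok_p' h.symm)] at hp'
          show S.label (ρ' (m * (L + 1))).1 p'
          rw [← hi']; exact hp'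
        · have hδ : ∀ j ∈ Finset.range i', δ j = dstep S ps α σ j :=
            fun j _ => mkD_run_delta S ps α okv hrun h02 j
          rw [Finset.sum_congr rfl hδ, hi', dstep_sum] at hc
          exact hc
        · intro j hj
          have hjlt : j * (L + 1) < i' := by
            rw [hi']; exact (Nat.mul_lt_mul_right (Nat.succ_pos L)).mpr hj
          have hokj : S'.label (ρ' (j * (L + 1))) okv := by
            rw [hlab_ok]
            exact Fin.ext (by rw [(hsh _).1, Nat.mul_mod_left]; rfl)
          have := hall _ hjlt hokj
          rw [hlab _ p (fun h => hok_p h.symm)] at this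
          exact this
    · -- AU
      constructor
      · intro hK ρ' δ hrun h0
        have h02 : ((ρ' 0).2 : ℕ) = 0 := by rw [h0]; rfl
        set σ : ℕ → Q := fun m => (ρ' (m * (L + 1))).1 with hσ
        have hσrun : S.Run σ := mkD_run_proj S ps α okv hrun h02
        have hσ0 : σ 0 = q := by
          show (ρ' (0 * (L + 1))).1 = q
          rw [Nat.zero_mul, h0]
          rfl
        obtain ⟨i, hp', hc, hall⟩ := hK σ hσrun hσ0
        have hsh := mkD_run_shape S ps α okv hrun h02
        refine ⟨i * (L + 1), ⟨?_, ?_⟩, ?_, ?_⟩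
        · rw [hlab_ok]
          exact Fin.ext (by rw [(hsh _).1, Nat.mul_mod_left]; rfl)
        · rw [hlab _ p' (fun h => hok_p' h.symm)]
          have : (ρ' (i * (L + 1))).1 = σ i := rfl
          rw [this]; exact hp'
        · have hδ : ∀ j ∈ Finset.range (i * (L + 1)), δ j = dstep S ps α σ j :=
            fun j _ => mkD_run_delta S ps α okv hrun h02 j
          rw [Finset.sum_congr rfl hδ, dstep_sum]
          exact hc
        · intro j hj hokj
          rw [hlab_ok] at hokj
          have hjm : j % (L + 1) = 0 := by
            have := (hsh j).1; rw [hokj] at this; exact this.symm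
          have hjd : j / (L + 1) < i :=
            (Nat.div_lt_iff_lt_mul (Nat.succ_pos L)).mpr hj
          rw [hlab _ p (fun h => hok_p h.symm), (hsh j).2]
          exact hall _ hjd
      · intro hD ρ hrun hρ0
        have hl0 : (liftR ρ 0 : Q × Fin (L + 1)) = (q, 0) := by
          show ((ρ (0 / (L + 1)), ⟨0 % (L + 1), _⟩) : Q × Fin (L + 1)) = (q, 0)
          rw [Nat.zero_div, hρ0]
          exact Prod.ext rfl (Fin.ext (Nat.zero_mod _))
        obtain ⟨i', ⟨hok, hp'⟩, hc, hall⟩ :=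
          hD (liftR ρ) (dstep S ps α ρ) (liftR_run S ps α okv hrun) hl0
        have hi'm : i' % (L + 1) = 0 := by
          rw [hlab_ok] at hok
          have : ((liftR ρ i' : Q × Fin (L + 1)).2 : ℕ) = 0 := by rw [hok]; rfl
          simpa [liftR] using this
        set m := i' / (L + 1) with hm
        have hi' : i' = m * (L + 1) := by
          rw [mul_comm, hm]
          have := Nat.div_add_mod i' (L + 1); omega
        refine ⟨m, ?_, ?_, ?_⟩
        · rw [hlab _ p' (fun h => hok_p' h.symm)] at hp'
          simpa [liftR, hm] using hp'
        · rw [hi', dstep_sum] at hc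
          exact hc
        · intro j hj
          have hjlt : j * (L + 1) < i' := by
            rw [hi']; exact (Nat.mul_lt_mul_right (Nat.succ_pos L)).mpr hj
          have hokj : S'.label (liftR ρ (j * (L + 1))) okv := by
            rw [hlab_ok]
            exact Fin.ext (by simpa [liftR] using Nat.mul_mod_left j (L + 1))
          have := hall _ hjlt hokj
          rw [hlab _ p (fun h => hok_p h.symm)] at this
          simpa [liftR, Nat.mul_div_cancel j (Nat.succ_pos L)] using this
end
end
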